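/- For all n, t ∈ ℕ one has q^{n·t} = Σ_{k=0}^n (q−1)^k q^{C(k,2)} binom(n,k)_q [t]_{k,q}, where [t]_{k,q} = ∏_{i=0}^{k−1} [t−i]_q is the k-th order q-factorial of t (with [m]_q = (1 − q^m)/(1 − q) for m ∈ ℤ, using that q is invertible; in particular [t]_{k,q} = 0 when k > t). (First equality of Equation (19).) -/

import Mathlib

/-!
Expanding `x ^ n` in the Newton basis `∏_{i<k} (x - q^i)` gives the Gaussian binomials as
coefficients (the q-Pascal rule is exactly the induction step). At `x = q^t` each factor
`q^t - q^i` equals `(q - 1) q^i [t - i]_q`, and the powers `q^i` multiply to `q^{C(k,2)}`.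
-/

/-- The q-analogue `[n]_q = (1 - q^n)/(1 - q)` of a natural number. -/
def qnum {K : Type*} [Field K] (q : K) (n : ℕ) : K := (1 - q ^ n) / (1 - q)

/-- The q-factorial `[n]_q! = ∏_{j=1}^n [j]_q`. -/
def qfact {K : Type*} [Field K] (q : K) (n : ℕ) : K :=
  ∏ j ∈ Finset.range n, qnum q (j + 1)

/-- The Gaussian binomial coefficient, `0` for `k > n`. -/
def qbinom {K : Type*} [Field K] (q : K) (n k : ℕ) : K :=
  if k ≤ n then qfact q n / (qfact q k * qfact q (n - k)) else 0

/-- The q-analogue `[m]_q = (1 - q^m)/(1 - q)` of an integer `m` (using `zpow`,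
meaningful since `q` is invertible). -/
def qznum {K : Type*} [Field K] (q : K) (m : ℤ) : K := (1 - q ^ m) / (1 - q)

section QAnalogues

variable {K : Type*} [Field K] (q : K)

theorem qnum_add (a b : ℕ) : qnum q (a + b) = qnum q a + q ^ a * qnum q b := by
  unfold qnum
  rw [← mul_div_assoc, ← add_div, pow_add]
  ring

@[simp]
theorem qfact_zero : qfact q 0 = 1 := Finset.prod_range_zero _

theorem qfact_succ (m : ℕ) : qfact q (m + 1) = qfact q m * qnum q (m + 1) :=
  Finset.prod_range_succ _ _

theorem qbinom_of_lt {n k : ℕ} (h : n < k) : qbinom q n k = 0 :=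
  if_neg (Nat.not_le.mpr h)

theorem zpow_sub_zpow_eq_mul_qznum (hq0 : q ≠ 0) (hq1 : q ≠ 1) (a b : ℤ) :
    q ^ a - q ^ b = (q - 1) * q ^ b * qznum q (a - b) := by
  have : 1 - q ≠ 0 := sub_ne_zero.mpr (Ne.symm hq1)
  rw [qznum, zpow_sub₀ hq0]
  field_simp
  ring

theorem prod_pow_sub_pow_eq_mul_prod_qznum (hq0 : q ≠ 0) (hq1 : q ≠ 1) (t k : ℕ) :
    ∏ i ∈ Finset.range k, (q ^ t - q ^ i) =
      (q - 1) ^ k * q ^ k.choose 2 * ∏ i ∈ Finset.range k, qznum q ((t : ℤ) - (i : ℤ)) := by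
  have hfactor (i : ℕ) : q ^ t - q ^ i = (q - 1) * q ^ i * qznum q ((t : ℤ) - (i : ℤ)) := by
    simpa only [zpow_natCast] using zpow_sub_zpow_eq_mul_qznum q hq0 hq1 t i
  rw [Finset.prod_congr rfl fun i _ => hfactor i, Finset.prod_mul_distrib, Finset.prod_mul_distrib,
    Finset.prod_const, Finset.card_range, Finset.prod_pow_eq_pow_sum, Finset.sum_range_id,
    Nat.choose_two_right]

variable {q} (hq : ∀ n : ℕ, 1 ≤ n → q ^ n ≠ 1)
include hq

theorem ne_one_of_forall_pow_ne_one : q ≠ 1 := by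
  simpa using hq 1 le_rfl

theorem qnum_succ_ne_zero (j : ℕ) : qnum q (j + 1) ≠ 0 :=
  div_ne_zero (sub_ne_zero.mpr fun h => hq (j + 1) j.succ_pos h.symm)
    (sub_ne_zero.mpr (ne_one_of_forall_pow_ne_one hq).symm)

theorem qfact_ne_zero (m : ℕ) : qfact q m ≠ 0 :=
  Finset.prod_ne_zero_iff.mpr fun j _ => qnum_succ_ne_zero hq j

theorem qbinom_zero_right (n : ℕ) : qbinom q n 0 = 1 := by
  rw [qbinom, if_pos n.zero_le, qfact_zero, one_mul, Nat.sub_zero, div_self (qfact_ne_zero hq n)]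

theorem qbinom_self (n : ℕ) : qbinom q n n = 1 := by
  rw [qbinom, if_pos le_rfl, Nat.sub_self, qfact_zero, mul_one, div_self (qfact_ne_zero hq n)]

theorem qbinom_succ_succ_of_lt {n k : ℕ} (hk : k < n) :
    qbinom q (n + 1) (k + 1) = qbinom q n k + q ^ (k + 1) * qbinom q n (k + 1) := by
  obtain ⟨m, rfl⟩ := Nat.exists_eq_add_of_lt hk
  have hnum : qnum q (k + m + 1 + 1) = qnum q (k + 1) + q ^ (k + 1) * qnum q (m + 1) := by
    rw [← qnum_add, show k + 1 + (m + 1) = k + m + 1 + 1 by ring]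
  simp only [qbinom, if_pos hk.le, if_pos (show k + 1 ≤ k + m + 1 by omega),
    if_pos (show k + 1 ≤ k + m + 1 + 1 by omega),
    show k + m + 1 + 1 - (k + 1) = m + 1 by omega, show k + m + 1 - k = m + 1 by omega,
    show k + m + 1 - (k + 1) = m by omega]
  rw [qfact_succ q (k + m + 1), qfact_succ q k, qfact_succ q m, hnum]
  have := qfact_ne_zero hq (k + m + 1)
  have := qfact_ne_zero hq k
  have := qfact_ne_zero hq m
  have := qnum_succ_ne_zero hq k
  have := qnum_succ_ne_zero hq m
  field_simp

theorem qbinom_succ_succ (n k : ℕ) :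
    qbinom q (n + 1) (k + 1) = qbinom q n k + q ^ (k + 1) * qbinom q n (k + 1) := by
  rcases lt_trichotomy k n with hk | rfl | hk
  · exact qbinom_succ_succ_of_lt hq hk
  · rw [qbinom_self hq, qbinom_self hq, qbinom_of_lt q k.lt_succ_self, mul_zero, add_zero]
  · rw [qbinom_of_lt q (by omega), qbinom_of_lt q hk, qbinom_of_lt q (by omega), mul_zero, add_zero]

theorem pow_eq_sum_qbinom_mul_prod_sub_pow (x : K) (n : ℕ) :
    x ^ n = ∑ k ∈ Finset.range (n + 1), qbinom q n k * ∏ i ∈ Finset.range k, (x - q ^ i) := by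
  induction n with
  | zero => simp [qbinom_zero_right hq]
  | succ n ih =>
    set P : ℕ → K := fun k => ∏ i ∈ Finset.range k, (x - q ^ i) with hP
    have hxP (k : ℕ) : x * P k = P (k + 1) + q ^ k * P k := by
      simp only [hP, Finset.prod_range_succ]; ring
    calc x ^ (n + 1)
        = ∑ k ∈ Finset.range (n + 1), qbinom q n k * (P (k + 1) + q ^ k * P k) := by
          rw [pow_succ', ih, Finset.mul_sum]
          refine Finset.sum_congr rfl fun k _ => ?_
          rw [← hxP]; ring
      _ = ∑ k ∈ Finset.range (n + 1), qbinom q n k * P (k + 1)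
            + ∑ k ∈ Finset.range (n + 2), q ^ k * qbinom q n k * P k := by
          rw [Finset.sum_range_succ _ (n + 1), qbinom_of_lt q n.lt_succ_self, mul_zero, zero_mul,
            add_zero, ← Finset.sum_add_distrib]
          refine Finset.sum_congr rfl fun k _ => ?_
          ring
      _ = ∑ k ∈ Finset.range (n + 1), qbinom q n k * P (k + 1)
            + (∑ k ∈ Finset.range (n + 1), q ^ (k + 1) * qbinom q n (k + 1) * P (k + 1) + 1) := by
          rw [Finset.sum_range_succ' _ (n + 1)]
          simp [hP, qbinom_zero_right hq]
      _ = ∑ k ∈ Finset.range (n + 2), qbinom q (n + 1) k * P k := by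
          rw [Finset.sum_range_succ' _ (n + 1), ← add_assoc, ← Finset.sum_add_distrib]
          simp only [qbinom_succ_succ hq, qbinom_zero_right hq, hP, Finset.prod_range_zero, mul_one]
          congr 1
          refine Finset.sum_congr rfl fun k _ => ?_
          ring

end QAnalogues

theorem q_pow_mul_eq_sum_qfactorial_general
    {K : Type*} [Field K] (q : K) (hq0 : q ≠ 0)
    (hq : ∀ n : ℕ, 1 ≤ n → q ^ n ≠ 1) (n t : ℕ) :
    q ^ (n * t) = ∑ k ∈ Finset.range (n + 1),
      (q - 1) ^ k * q ^ Nat.choose k 2 * qbinom q n k *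
        ∏ i ∈ Finset.range k, qznum q ((t : ℤ) - (i : ℤ)) := by
  rw [mul_comm, pow_mul, pow_eq_sum_qbinom_mul_prod_sub_pow hq]
  refine Finset.sum_congr rfl fun k _ => ?_
  rw [prod_pow_sub_pow_eq_mul_prod_qznum q hq0 (ne_one_of_forall_pow_ne_one hq)]
  ring

/-- **First equality of Equation (19)**:
`q^{nt} = Σ_{k=0}^n (q-1)^k q^{C(k,2)} binom(n,k)_q [t]_{k,q}`, where
`[t]_{k,q} = ∏_{i=0}^{k-1} [t-i]_q` is the k-th order q-factorial of `t`. -/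
theorem q_pow_mul_eq_sum_qfactorial
    {K : Type*} [Field K] [CharZero K] (q : K) (hq0 : q ≠ 0)
    (hq : ∀ n : ℕ, 1 ≤ n → q ^ n ≠ 1) (n t : ℕ) :
    q ^ (n * t) = ∑ k ∈ Finset.range (n + 1),
      (q - 1) ^ k * q ^ Nat.choose k 2 * qbinom q n k *
        ∏ i ∈ Finset.range k, qznum q ((t : ℤ) - (i : ℤ)) :=
  q_pow_mul_eq_sum_qfactorial_general q hq0 hq n t
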